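/- arXiv:2311.02589 — 3 statements merged into one kernel-verified Lean document; each statement's English description precedes it below -/
import Mathlib

section
/- Let M be an obviously strategy-proof mechanism with strategies (S_1,...,S_n) realizing allocation rule f and payments P_1,...,P_n. Fix a player i, a node u belonging to player i, and two valuation profiles (v_i,v_{-i}) and (v'_i,v'_{-i}) such that u lies on both the path induced by (S_i(v_i),S_{-i}(v_{-i})) and the path induced by (S_i(v'_i),S_{-i}(v'_{-i})), and such that player i's utility under (v_i,v_{-i}), namely v_i(f(v_i,v_{-i})) - P_i(v_i,v_{-i}), is strictly less than v_i(f(v'_i,v'_{-i})) - P_i(v'_i,v'_{-i}). Then S_i(v_i) and S_i(v'_i) dictate the same message at node u. -/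
/-- An outcome of a mechanism: an allocation (a bundle of type `A` for each of the `n`
players) together with a payment for each player. -/
structure Outcome (n : ℕ) (A : Type) where
  alloc : Fin n → A
  pay : Fin n → ℝ

/-- A sequential perfect-information mechanism: a finite rooted tree where each leaf is
labeled by an outcome, and each internal node is owned by exactly one player who chooses
one of the (finitely many, at least one) children by sending a message. -/
inductive GameTree (n : ℕ) (A : Type) : Type
  | leaf : Outcome n A → GameTree n A
  | node : Fin n → (k : ℕ) → (Fin (k + 1) → GameTree n A) → GameTree n A

namespace GameTree

variable {n : ℕ} {A : Type}

/-- A behavior of a player: a message (a natural number) at every node.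
(Only the messages at the player's own nodes matter.) -/
abbrev Behavior (n : ℕ) (A : Type) := GameTree n A → ℕ

/-- The player who sends a message at a node (none at a leaf). -/
def owner : GameTree n A → Option (Fin n)
  | leaf _ => none
  | node p _ _ => some p

/-- The effective message a behavior sends at a node (reduced modulo the arity). -/
def msgAt (B : Behavior n A) : GameTree n A → ℕ
  | leaf _ => 0
  | node p k cs => B (node p k cs) % (k + 1)

/-- The outcome (leaf label) reached from a node under a behavior profile. -/
def play (B : Fin n → Behavior n A) : GameTree n A → Outcome n A
  | leaf o => o
  | node p k cs => play B (cs ⟨B p (node p k cs) % (k + 1), Nat.mod_lt _ k.succ_pos⟩)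

/-- The leaf (as a subtree) reached from a node under a behavior profile. -/
def leafOf (B : Fin n → Behavior n A) : GameTree n A → GameTree n A
  | leaf o => leaf o
  | node p k cs => leafOf B (cs ⟨B p (node p k cs) % (k + 1), Nat.mod_lt _ k.succ_pos⟩)

/-- `onPath B t u` : the node `u` lies on the path from `t` induced by the behavior
profile `B`. -/
def onPath (B : Fin n → Behavior n A) : GameTree n A → GameTree n A → Prop
  | leaf o, u => u = leaf o
  | node p k cs, u => u = node p k cs ∨
      onPath B (cs ⟨B p (node p k cs) % (k + 1), Nat.mod_lt _ k.succ_pos⟩) u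

/-- All outcomes labeling leaves of the tree. -/
def allLeaves : GameTree n A → Set (Outcome n A)
  | leaf o => {o}
  | node _ _ cs => ⋃ i, allLeaves (cs i)

/-- Player `i`'s utility from an outcome, given her valuation `v` on bundles:
value of the allocated bundle minus the payment. -/
def util (v : A → ℝ) (i : Fin n) (o : Outcome n A) : ℝ := v (o.alloc i) - o.pay i

/-- `S i` is a dominant strategy for player `i` (with valuation domains `D` and valuation
interpretation `val`): for every strategy profile of the others, every valuation profile,
and every alternative behavior, following `S i` is at least as good. -/
def DominantStrategy (t : GameTree n A) (D : Fin n → Type) (val : ∀ i, D i → A → ℝ)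
    (S : ∀ i, D i → Behavior n A) (i : Fin n) : Prop :=
  ∀ (S' : ∀ j, D j → Behavior n A) (v : ∀ j, D j) (B' : Behavior n A),
    util (val i (v i)) i
        (play (Function.update (fun j => S' j (v j)) i (S i (v i))) t) ≥
      util (val i (v i)) i
        (play (Function.update (fun j => S' j (v j)) i B') t)

/-- `Bi` is an obviously dominant behavior for player `i` with valuation `v`: at every
node `u` of player `i` attainable given `Bi` (witnessed by a behavior profile `Bo` that
agrees with `Bi` for `i` and passes through `u`), and for every behavior profile `B'`
passing through `u` in which player `i` sends a different message at `u`, the (worst-case)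
outcome of following `Bi` is at least as good as the (best-case) outcome of `B'`. -/
def ObviouslyDominantBehavior (t : GameTree n A) (i : Fin n) (v : A → ℝ)
    (Bi : Behavior n A) : Prop :=
  ∀ u : GameTree n A, owner u = some i →
    ∀ Bo B' : Fin n → Behavior n A,
      Bo i = Bi →
      onPath Bo t u → onPath B' t u →
      msgAt Bi u ≠ msgAt (B' i) u →
      util v i (play Bo t) ≥ util v i (play B' t)

/-- A strategy of player `i` is obviously dominant if each of its behaviors is obviously
dominant for the corresponding valuation. -/
def ObviouslyDominantStrategy (t : GameTree n A) (i : Fin n) {Di : Type}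
    (val : Di → A → ℝ) (Si : Di → Behavior n A) : Prop :=
  ∀ v : Di, ObviouslyDominantBehavior t i (val v) (Si v)

end GameTree

/-- Lemma 1: In an obviously strategy-proof mechanism realizing the
allocation rule `f` and payments `P`, if a node `u` of player `i` lies on the paths
induced by the strategies for two valuation profiles `v` and `v'`, and player `i`'s
(true) utility under `v` is strictly less than her `v i`-utility at the outcome of `v'`,
then `S i (v i)` and `S i (v' i)` dictate the same message at `u`. -/
theorem osp_same_message_at_divergence
    {n : ℕ} {A : Type} (D : Fin n → Type) (val : ∀ i, D i → A → ℝ)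
    (t : GameTree n A) (S : ∀ i, D i → GameTree.Behavior n A)
    (f : (∀ j, D j) → Fin n → A) (P : (∀ j, D j) → Fin n → ℝ)
    (hreal : ∀ v : ∀ j, D j, GameTree.play (fun j => S j (v j)) t = ⟨f v, P v⟩)
    (hOSP : ∀ i, GameTree.ObviouslyDominantStrategy t i (val i) (S i))
    (i : Fin n) (u : GameTree n A) (hu : GameTree.owner u = some i)
    (v v' : ∀ j, D j)
    (h1 : GameTree.onPath (fun j => S j (v j)) t u)
    (h2 : GameTree.onPath (fun j => S j (v' j)) t u)
    (hlt : val i (v i) (f v i) - P v i < val i (v i) (f v' i) - P v' i) :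
    GameTree.msgAt (S i (v i)) u = GameTree.msgAt (S i (v' i)) u := by
  by_contra hne
  have h := hOSP i (v i) u hu (fun j => S j (v j)) (fun j => S j (v' j)) rfl h1 h2 hne
  rw [hreal v, hreal v'] at h
  simp only [GameTree.util] at h
  linarith
end

section
/- Fix two positive reals x_h > x_l. For a combinatorial auction where every bidder's valuation is additive with each per-item value in {0, x_l, x_h}, the sequential mechanism in which (round 1) bidders, in order, claim remaining items they value at x_h at price x_l each, and (round 2) bidders, in order, claim remaining items they value at x_l at price x_l each, is obviously strategy-proof and its realized allocation maximizes social welfare. -/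
open Finset

/-- The order in which decision nodes occur: round 0 for bidders `0,…,n-1`, then
round 1 for bidders `0,…,n-1`. -/
def serOrder (n : ℕ) : List (Fin 2 × Fin n) :=
  ((List.finRange n).map fun i => ((0 : Fin 2), i)) ++
    ((List.finRange n).map fun i => ((1 : Fin 2), i))

/-- The state of the serial mechanism: the remaining items, and the items taken so far by
each bidder in each round. -/
structure SerState (n m : ℕ) where
  rem : Finset (Fin m)
  taken : Fin 2 → Fin n → Finset (Fin m)

/-- One step of the serial mechanism: at position `p = (round, bidder)`, the bidder claims
`C p.1 p.2 rem` (intersected with the remaining items), which is removed from the pool. -/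
def serStep {n m : ℕ} (C : Fin 2 → Fin n → Finset (Fin m) → Finset (Fin m))
    (st : SerState n m) (p : Fin 2 × Fin n) : SerState n m :=
  let pick := C p.1 p.2 st.rem ∩ st.rem
  ⟨st.rem \ pick,
    fun r i => if r = p.1 ∧ i = p.2 then st.taken r i ∪ pick else st.taken r i⟩

/-- Running the serial mechanism over a list of positions from a state. -/
def serRunFrom {n m : ℕ} (C : Fin 2 → Fin n → Finset (Fin m) → Finset (Fin m))
    (st : SerState n m) (l : List (Fin 2 × Fin n)) : SerState n m :=
  l.foldl (serStep C) st

/-- The final state of the serial mechanism when all items are initially available. -/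
def serRun {n m : ℕ} (C : Fin 2 → Fin n → Finset (Fin m) → Finset (Fin m)) :
    SerState n m :=
  serRunFrom C ⟨Finset.univ, fun _ _ => ∅⟩ (serOrder n)

/-- The bundle finally won by bidder `i`. -/
def serBundle {n m : ℕ} (C : Fin 2 → Fin n → Finset (Fin m) → Finset (Fin m))
    (i : Fin n) : Finset (Fin m) :=
  (serRun C).taken 0 i ∪ (serRun C).taken 1 i

/-- Bidder `i`'s utility: total value of the won items minus the posted price `x_l` per
won item. -/
def serUtil {n m : ℕ} (x_l : ℝ) (v : Fin m → ℝ)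
    (C : Fin 2 → Fin n → Finset (Fin m) → Finset (Fin m)) (i : Fin n) : ℝ :=
  (∑ j ∈ serBundle C i, v j) - x_l * (serBundle C i).card

/-- The index of position `p` in the order of play. -/
def posIdx {n : ℕ} (p : Fin 2 × Fin n) : ℕ := p.1.val * n + p.2.val

/-- The set of remaining items just before position `p` is played. -/
def remBefore {n m : ℕ} (C : Fin 2 → Fin n → Finset (Fin m) → Finset (Fin m))
    (p : Fin 2 × Fin n) : Finset (Fin m) :=
  (serRunFrom C ⟨Finset.univ, fun _ _ => ∅⟩ ((serOrder n).take (posIdx p))).rem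

/-- The set of items actually claimed at position `p` in the run of `C`. -/
def pickAt {n m : ℕ} (C : Fin 2 → Fin n → Finset (Fin m) → Finset (Fin m))
    (p : Fin 2 × Fin n) : Finset (Fin m) :=
  C p.1 p.2 (remBefore C p) ∩ remBefore C p

/-- The truthful strategy of a bidder with additive valuation `v`: in round 0 claim the
remaining items valued at `x_h`, and in round 1 claim the remaining items valued at
`x_l`. -/
noncomputable def truthful {m : ℕ} (x_l x_h : ℝ) (v : Fin m → ℝ) :
    Fin 2 → Finset (Fin m) → Finset (Fin m) :=
  fun r R => if r = 0 then R.filter (fun j => v j = x_h) else R.filter (fun j => v j = x_l)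

namespace SerAux

variable {n m : ℕ}

/-- The state after the first `k` steps. -/
def stAt (C : Fin 2 → Fin n → Finset (Fin m) → Finset (Fin m)) (k : ℕ) : SerState n m :=
  serRunFrom C ⟨Finset.univ, fun _ _ => ∅⟩ ((serOrder n).take k)

lemma remBefore_eq (C : Fin 2 → Fin n → Finset (Fin m) → Finset (Fin m))
    (p : Fin 2 × Fin n) : remBefore C p = (stAt C (posIdx p)).rem := rfl

lemma serOrder_length : (serOrder n).length = n + n := by simp [serOrder]

lemma posIdx_zero (i : Fin n) : posIdx ((0 : Fin 2), i) = i.val := by simp [posIdx]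

lemma posIdx_one (i : Fin n) : posIdx ((1 : Fin 2), i) = n + i.val := by simp [posIdx]

lemma posIdx_lt (p : Fin 2 × Fin n) : posIdx p < n + n := by
  have h1 : p.1.val < 2 := p.1.isLt
  have h2 : p.2.val < n := p.2.isLt
  have : p.1.val * n ≤ 1 * n := Nat.mul_le_mul_right n (by omega)
  unfold posIdx; omega

lemma getElem?_low {k : ℕ} (hk : k < n) :
    (serOrder n)[k]? = some ((0 : Fin 2), ⟨k, hk⟩) := by
  unfold serOrder
  rw [List.getElem?_append_left (by simpa using hk)]
  simp [hk]

lemma getElem?_high {k : ℕ} (hk : k < n) :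
    (serOrder n)[n + k]? = some ((1 : Fin 2), ⟨k, hk⟩) := by
  unfold serOrder
  rw [List.getElem?_append_right (by simp)]
  simp [hk]

lemma getElem?_posIdx (p : Fin 2 × Fin n) :
    (serOrder n)[posIdx p]? = some p := by
  obtain ⟨r, i⟩ := p
  rcases r with ⟨rv, hr⟩
  interval_cases rv
  · show (serOrder n)[posIdx ((0 : Fin 2), i)]? = some ((0 : Fin 2), i)
    rw [posIdx_zero, getElem?_low i.isLt]
  · show (serOrder n)[posIdx ((1 : Fin 2), i)]? = some ((1 : Fin 2), i)
    rw [posIdx_one, getElem?_high i.isLt]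

lemma posIdx_getElem? {k : ℕ} {p : Fin 2 × Fin n}
    (hp : (serOrder n)[k]? = some p) : posIdx p = k := by
  have hk : k < n + n := by
    by_contra h
    rw [List.getElem?_eq_none_iff.mpr (by rw [serOrder_length]; omega)] at hp
    exact Option.some_ne_none p hp.symm
  rcases Nat.lt_or_ge k n with h | h
  · rw [getElem?_low h] at hp
    injection hp with hp
    subst hp
    simp [posIdx]
  · have h2 : k - n < n := by omega
    have hh : (serOrder n)[k]? = some ((1 : Fin 2), ⟨k - n, h2⟩) := by
      have := getElem?_high h2
      rwa [Nat.add_sub_cancel' h] at this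
    rw [hh] at hp
    injection hp with hp
    subst hp
    simp [posIdx]
    omega

lemma stAt_zero (C : Fin 2 → Fin n → Finset (Fin m) → Finset (Fin m)) :
    stAt C 0 = ⟨Finset.univ, fun _ _ => ∅⟩ := rfl

lemma stAt_succ_some {k : ℕ} {p : Fin 2 × Fin n}
    (C : Fin 2 → Fin n → Finset (Fin m) → Finset (Fin m))
    (hp : (serOrder n)[k]? = some p) :
    stAt C (k + 1) = serStep C (stAt C k) p := by
  unfold stAt serRunFrom
  rw [List.take_succ, hp, List.foldl_append]
  rfl

lemma stAt_succ_none {k : ℕ}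
    (C : Fin 2 → Fin n → Finset (Fin m) → Finset (Fin m))
    (hp : (serOrder n)[k]? = none) :
    stAt C (k + 1) = stAt C k := by
  unfold stAt serRunFrom
  rw [List.take_succ, hp, List.foldl_append]
  rfl

lemma rem_succ_some {k : ℕ} {p : Fin 2 × Fin n}
    (C : Fin 2 → Fin n → Finset (Fin m) → Finset (Fin m))
    (hp : (serOrder n)[k]? = some p) :
    (stAt C (k + 1)).rem = (stAt C k).rem \ pickAt C p := by
  rw [stAt_succ_some C hp]
  have hk : posIdx p = k := posIdx_getElem? hp
  show (stAt C k).rem \ _ = _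
  rw [pickAt, remBefore_eq, hk]

lemma rem_mono (C : Fin 2 → Fin n → Finset (Fin m) → Finset (Fin m)) :
    ∀ {k k' : ℕ}, k ≤ k' → (stAt C k').rem ⊆ (stAt C k).rem := by
  intro k k' h
  induction k' with
  | zero =>
    have : k = 0 := by omega
    subst this; exact subset_rfl
  | succ k'' ih =>
    rcases Nat.eq_or_lt_of_le h with rfl | h'
    · exact subset_rfl
    · have hk : k ≤ k'' := by omega
      cases hp : (serOrder n)[k'']? with
      | none => rw [stAt_succ_none C hp]; exact ih hk
      | some p =>
        rw [rem_succ_some C hp]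
        exact (Finset.sdiff_subset).trans (ih hk)

lemma taken_stAt (C : Fin 2 → Fin n → Finset (Fin m) → Finset (Fin m))
    (r : Fin 2) (i : Fin n) :
    ∀ k : ℕ, (stAt C k).taken r i = if posIdx (r, i) < k then pickAt C (r, i) else ∅ := by
  intro k
  induction k with
  | zero => simp [stAt_zero]
  | succ k ih =>
    cases hp : (serOrder n)[k]? with
    | none =>
      have hlen : n + n ≤ k := by
        have := List.getElem?_eq_none_iff.mp hp
        rwa [serOrder_length] at this
      have hlt : posIdx (r, i) < n + n := posIdx_lt _
      rw [stAt_succ_none C hp, ih, if_pos (by omega), if_pos (by omega)]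
    | some p =>
      have hk : posIdx p = k := posIdx_getElem? hp
      rw [stAt_succ_some C hp]
      show (if r = p.1 ∧ i = p.2 then (stAt C k).taken r i ∪ (C p.1 p.2 (stAt C k).rem ∩ (stAt C k).rem)
          else (stAt C k).taken r i) = _
      by_cases hri : r = p.1 ∧ i = p.2
      · obtain ⟨h1, h2⟩ := hri
        have hpe : p = (r, i) := by rw [h1, h2]
        subst hpe
        have hkk : posIdx (r, i) = k := hk
        rw [if_pos ⟨rfl, rfl⟩, ih, if_neg (by omega), if_pos (by omega)]
        rw [Finset.empty_union, pickAt, remBefore_eq, hkk]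
      · rw [if_neg hri, ih]
        have hne : posIdx (r, i) ≠ k := by
          intro hEq
          have : (serOrder n)[k]? = some (r, i) := by
            rw [← hEq]; exact getElem?_posIdx (r, i)
          rw [hp] at this
          obtain rfl := (Option.some_injective _ this).symm
          exact hri ⟨rfl, rfl⟩
        by_cases hlt : posIdx (r, i) < k
        · rw [if_pos hlt, if_pos (by omega)]
        · rw [if_neg hlt, if_neg (by omega)]

lemma serRun_eq (C : Fin 2 → Fin n → Finset (Fin m) → Finset (Fin m)) :
    serRun C = stAt C (n + n) := by
  unfold serRun stAt
  rw [List.take_of_length_le (le_of_eq serOrder_length)]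

lemma taken_run (C : Fin 2 → Fin n → Finset (Fin m) → Finset (Fin m))
    (r : Fin 2) (i : Fin n) : (serRun C).taken r i = pickAt C (r, i) := by
  rw [serRun_eq, taken_stAt, if_pos (posIdx_lt _)]

lemma serBundle_eq (C : Fin 2 → Fin n → Finset (Fin m) → Finset (Fin m)) (i : Fin n) :
    serBundle C i = pickAt C ((0 : Fin 2), i) ∪ pickAt C ((1 : Fin 2), i) := by
  rw [serBundle, taken_run, taken_run]

lemma pickAt_subset (C : Fin 2 → Fin n → Finset (Fin m) → Finset (Fin m))
    (p : Fin 2 × Fin n) : pickAt C p ⊆ remBefore C p := Finset.inter_subset_right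

lemma pickAt_disjoint (C : Fin 2 → Fin n → Finset (Fin m) → Finset (Fin m))
    {q p : Fin 2 × Fin n} (h : posIdx q < posIdx p) :
    Disjoint (pickAt C q) (pickAt C p) := by
  rw [Finset.disjoint_left]
  intro x hq hp'
  have h1 : x ∈ (stAt C (posIdx p)).rem := by
    rw [← remBefore_eq]; exact pickAt_subset C p hp'
  have h2 : x ∈ (stAt C (posIdx q + 1)).rem := rem_mono C (by omega) h1
  rw [rem_succ_some C (getElem?_posIdx q)] at h2
  exact (Finset.mem_sdiff.mp h2).2 hq

lemma pickAt_disjoint' (C : Fin 2 → Fin n → Finset (Fin m) → Finset (Fin m))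
    {q p : Fin 2 × Fin n} (h : posIdx q ≠ posIdx p) :
    Disjoint (pickAt C q) (pickAt C p) := by
  rcases Nat.lt_or_ge (posIdx q) (posIdx p) with h' | h'
  · exact pickAt_disjoint C h'
  · exact (pickAt_disjoint C (by omega)).symm

lemma rem_eq_of_picks_eq (C C' : Fin 2 → Fin n → Finset (Fin m) → Finset (Fin m))
    (k : ℕ) (h : ∀ q : Fin 2 × Fin n, posIdx q < k → pickAt C q = pickAt C' q) :
    (stAt C k).rem = (stAt C' k).rem := by
  induction k with
  | zero => rfl
  | succ k ih =>
    have ih' := ih (fun q hq => h q (by omega))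
    cases hp : (serOrder n)[k]? with
    | none => rw [stAt_succ_none C hp, stAt_succ_none C' hp, ih']
    | some p =>
      rw [rem_succ_some C hp, rem_succ_some C' hp, ih',
        h p (by rw [posIdx_getElem? hp]; omega)]

lemma exists_pick_of_not_mem_rem (C : Fin 2 → Fin n → Finset (Fin m) → Finset (Fin m))
    {j : Fin m} :
    ∀ k : ℕ, j ∉ (stAt C k).rem → ∃ q : Fin 2 × Fin n, posIdx q < k ∧ j ∈ pickAt C q := by
  intro k
  induction k with
  | zero => intro hj; exact absurd (Finset.mem_univ j) hj
  | succ k ih =>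
    intro hj
    cases hp : (serOrder n)[k]? with
    | none =>
      rw [stAt_succ_none C hp] at hj
      obtain ⟨q, hq, hjq⟩ := ih hj
      exact ⟨q, by omega, hjq⟩
    | some p =>
      rw [rem_succ_some C hp] at hj
      by_cases hjk : j ∈ (stAt C k).rem
      · refine ⟨p, by rw [posIdx_getElem? hp]; omega, ?_⟩
        by_contra hnp
        exact hj (Finset.mem_sdiff.mpr ⟨hjk, hnp⟩)
      · obtain ⟨q, hq, hjq⟩ := ih hjk
        exact ⟨q, by omega, hjq⟩

lemma serUtil_eq_sum (x_l : ℝ) (v : Fin m → ℝ)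
    (C : Fin 2 → Fin n → Finset (Fin m) → Finset (Fin m)) (i : Fin n) :
    serUtil x_l v C i = ∑ j ∈ serBundle C i, (v j - x_l) := by
  rw [serUtil, Finset.sum_sub_distrib, Finset.sum_const, nsmul_eq_mul, mul_comm]

lemma pick0_truthful (x_l x_h : ℝ) (v : Fin m → ℝ)
    (C : Fin 2 → Fin n → Finset (Fin m) → Finset (Fin m)) (i : Fin n)
    (hC : ∀ (r' : Fin 2) (R' : Finset (Fin m)), C r' i R' = truthful x_l x_h v r' R') :
    pickAt C ((0 : Fin 2), i) =
      (remBefore C ((0 : Fin 2), i)).filter (fun j => v j = x_h) := by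
  rw [pickAt]
  show C 0 i _ ∩ _ = _
  rw [hC, truthful, if_pos rfl,
    Finset.inter_eq_left.mpr (Finset.filter_subset _ _)]

lemma pick1_truthful (x_l x_h : ℝ) (v : Fin m → ℝ)
    (C : Fin 2 → Fin n → Finset (Fin m) → Finset (Fin m)) (i : Fin n)
    (hC : ∀ (r' : Fin 2) (R' : Finset (Fin m)), C r' i R' = truthful x_l x_h v r' R') :
    pickAt C ((1 : Fin 2), i) =
      (remBefore C ((1 : Fin 2), i)).filter (fun j => v j = x_l) := by
  rw [pickAt]
  show C 1 i _ ∩ _ = _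
  rw [hC, truthful, if_neg (by decide),
    Finset.inter_eq_left.mpr (Finset.filter_subset _ _)]

lemma serUtil_truthful (x_l x_h : ℝ) (v : Fin m → ℝ)
    (C : Fin 2 → Fin n → Finset (Fin m) → Finset (Fin m)) (i : Fin n)
    (hC : ∀ (r' : Fin 2) (R' : Finset (Fin m)), C r' i R' = truthful x_l x_h v r' R') :
    serUtil x_l v C i = ∑ _j ∈ pickAt C ((0 : Fin 2), i), (x_h - x_l) := by
  have hdisj : Disjoint (pickAt C ((0 : Fin 2), i)) (pickAt C ((1 : Fin 2), i)) := by
    apply pickAt_disjoint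
    rw [posIdx_zero, posIdx_one]
    have := i.isLt; omega
  rw [serUtil_eq_sum, serBundle_eq, Finset.sum_union hdisj]
  have h1 : ∑ j ∈ pickAt C ((1 : Fin 2), i), (v j - x_l) = 0 := by
    apply Finset.sum_eq_zero
    intro j hj
    rw [pick1_truthful x_l x_h v C i hC] at hj
    rw [(Finset.mem_filter.mp hj).2]; ring
  rw [h1, add_zero]
  apply Finset.sum_congr rfl
  intro j hj
  rw [pick0_truthful x_l x_h v C i hC] at hj
  rw [(Finset.mem_filter.mp hj).2]

lemma pickAt_subset_serBundle (C : Fin 2 → Fin n → Finset (Fin m) → Finset (Fin m))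
    (q : Fin 2 × Fin n) : pickAt C q ⊆ serBundle C q.2 := by
  rw [serBundle_eq]
  obtain ⟨r, i⟩ := q
  rcases r with ⟨rv, hr⟩
  interval_cases rv
  · exact Finset.subset_union_left
  · exact Finset.subset_union_right

/-- The maximum over bidders of the value of item `j` (0 if all values are 0). -/
noncomputable def Mv (x_l x_h : ℝ) (v : Fin n → Fin m → ℝ) (j : Fin m) : ℝ :=
  open Classical in
  if ∃ i, v i j = x_h then x_h
  else if ∃ i, v i j = x_l then x_l else 0

lemma Mv_nonneg {x_l x_h : ℝ} (hpos : 0 < x_l) (hlt : x_l < x_h)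
    (v : Fin n → Fin m → ℝ) (j : Fin m) : 0 ≤ Mv x_l x_h v j := by
  unfold Mv
  split
  · linarith
  · split
    · linarith
    · exact le_refl 0

lemma high_item_picked (x_l x_h : ℝ) (v : Fin n → Fin m → ℝ) (j : Fin m) (i0 : Fin n)
    (h0 : v i0 j = x_h) :
    ∃ k : Fin n, j ∈ pickAt (fun r i' => truthful x_l x_h (v i') r) ((0 : Fin 2), k) ∧
      v k j = x_h := by
  set T : Fin 2 → Fin n → Finset (Fin m) → Finset (Fin m) :=
    fun r i' => truthful x_l x_h (v i') r with hT
  by_cases hjr : j ∈ remBefore T ((0 : Fin 2), i0)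
  · refine ⟨i0, ?_, h0⟩
    rw [pick0_truthful x_l x_h (v i0) T i0 (fun _ _ => rfl)]
    exact Finset.mem_filter.mpr ⟨hjr, h0⟩
  · rw [remBefore_eq] at hjr
    obtain ⟨q, hq, hjq⟩ := exists_pick_of_not_mem_rem T _ hjr
    have hq1 : q.1 = (0 : Fin 2) := by
      apply Fin.ext
      simp only [posIdx, Fin.val_zero, zero_mul, zero_add] at hq
      have h2 := q.1.isLt
      have h3 := q.2.isLt
      have h4 := i0.isLt
      by_contra hne
      have : q.1.val = 1 := by omega
      rw [this, one_mul] at hq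
      omega
    have hqe : q = ((0 : Fin 2), q.2) := Prod.ext hq1 rfl
    rw [hqe] at hjq
    refine ⟨q.2, hjq, ?_⟩
    rw [pick0_truthful x_l x_h (v q.2) T q.2 (fun _ _ => rfl)] at hjq
    exact (Finset.mem_filter.mp hjq).2

lemma low_item_picked (x_l x_h : ℝ) (v : Fin n → Fin m → ℝ) (j : Fin m) (i0 : Fin n)
    (h0 : v i0 j = x_l) :
    ∃ q : Fin 2 × Fin n, j ∈ pickAt (fun r i' => truthful x_l x_h (v i') r) q := by
  set T : Fin 2 → Fin n → Finset (Fin m) → Finset (Fin m) :=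
    fun r i' => truthful x_l x_h (v i') r with hT
  by_cases hjr : j ∈ remBefore T ((1 : Fin 2), i0)
  · refine ⟨((1 : Fin 2), i0), ?_⟩
    rw [pick1_truthful x_l x_h (v i0) T i0 (fun _ _ => rfl)]
    exact Finset.mem_filter.mpr ⟨hjr, h0⟩
  · rw [remBefore_eq] at hjr
    obtain ⟨q, _, hjq⟩ := exists_pick_of_not_mem_rem T _ hjr
    exact ⟨q, hjq⟩

lemma bundles_disjoint (C : Fin 2 → Fin n → Finset (Fin m) → Finset (Fin m))
    {i k : Fin n} (h : i ≠ k) : Disjoint (serBundle C i) (serBundle C k) := by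
  have hik : i.val ≠ k.val := fun hc => h (Fin.ext hc)
  rw [serBundle_eq, serBundle_eq]
  have hn := i.isLt
  have hn' := k.isLt
  apply Finset.disjoint_union_left.mpr
  constructor <;> apply Finset.disjoint_union_right.mpr <;> constructor <;>
    apply pickAt_disjoint' <;> simp only [posIdx_zero, posIdx_one] <;> omega

end SerAux

/-- Theorem 3: For two positive reals `x_h > x_l` and additive bidders
whose per-item values lie in `{0, x_l, x_h}`, the serial posted-price mechanism (round 0:
bidders in order claim remaining items they value at `x_h`, at price `x_l` each; round 1:
bidders in order claim remaining items they value at `x_l`, at price `x_l` each) is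
obviously strategy-proof and its realized allocation maximizes the social welfare.

Obvious strategy-proofness: for every bidder `i`, valuation `v`, and decision node — a
position `(r, i)` together with the history of picks before it — attainable under the
truthful strategy of `i` (profile `C`, truthful for `i`), and any deviating profile `C'`
producing the same history up to `(r, i)` but a different pick at `(r, i)`, the utility
of `C` is at least that of `C'`. -/
theorem serial_posted_price_osp_and_welfare_maximizing
    (n m : ℕ) (x_l x_h : ℝ) (hpos : 0 < x_l) (hlt : x_l < x_h) :
    -- obviously strategy-proof
    (∀ (i : Fin n) (v : Fin m → ℝ), (∀ j, v j = 0 ∨ v j = x_l ∨ v j = x_h) →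
      ∀ (r : Fin 2) (C C' : Fin 2 → Fin n → Finset (Fin m) → Finset (Fin m)),
        (∀ (r' : Fin 2) (R' : Finset (Fin m)), C r' i R' = truthful x_l x_h v r' R') →
        (∀ q : Fin 2 × Fin n, posIdx q < posIdx (r, i) → pickAt C q = pickAt C' q) →
        pickAt C' (r, i) ≠ pickAt C (r, i) →
        serUtil x_l v C i ≥ serUtil x_l v C' i) ∧
    -- welfare maximization under truthful play
    (∀ v : Fin n → Fin m → ℝ, (∀ i j, v i j = 0 ∨ v i j = x_l ∨ v i j = x_h) →
      ∀ a : Fin n → Finset (Fin m), (∀ i j : Fin n, i ≠ j → Disjoint (a i) (a j)) →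
        (∑ i, ∑ x ∈ a i, v i x) ≤
          ∑ i, ∑ x ∈ serBundle (fun r i' => truthful x_l x_h (v i') r) i, v i x) := by
  constructor
  · -- obvious strategy-proofness
    intro i v hv r C C' hC hhist _hdiff
    classical
    have hle : posIdx ((0 : Fin 2), i) ≤ posIdx (r, i) := by
      have := r.isLt
      simp only [posIdx, Fin.val_zero, zero_mul, zero_add]
      have : r.val * n ≥ 0 := Nat.zero_le _
      omega
    have hR0 : remBefore C' ((0 : Fin 2), i) = remBefore C ((0 : Fin 2), i) := by
      rw [SerAux.remBefore_eq, SerAux.remBefore_eq]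
      exact (SerAux.rem_eq_of_picks_eq C C' _ (fun q hq => hhist q (by omega))).symm
    have hbsub : serBundle C' i ⊆ remBefore C ((0 : Fin 2), i) := by
      rw [SerAux.serBundle_eq]
      apply Finset.union_subset
      · exact (SerAux.pickAt_subset C' _).trans (le_of_eq hR0)
      · intro x hx
        have h1 := SerAux.pickAt_subset C' ((1 : Fin 2), i) hx
        rw [SerAux.remBefore_eq] at h1
        have h2 : x ∈ (SerAux.stAt C' (posIdx ((0 : Fin 2), i))).rem := by
          apply SerAux.rem_mono C' ?_ h1
          simp only [SerAux.posIdx_zero, SerAux.posIdx_one]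
          omega
        rw [← SerAux.remBefore_eq, hR0] at h2
        exact h2
    have hP0 : pickAt C ((0 : Fin 2), i) =
        (remBefore C ((0 : Fin 2), i)).filter (fun j => v j = x_h) :=
      SerAux.pick0_truthful x_l x_h v C i hC
    rw [ge_iff_le, SerAux.serUtil_eq_sum x_l v C' i,
      SerAux.serUtil_truthful x_l x_h v C i hC]
    calc ∑ j ∈ serBundle C' i, (v j - x_l)
        ≤ ∑ j ∈ (serBundle C' i).filter (fun j => v j = x_h), (v j - x_l) := by
          have h0 : ∑ j ∈ (serBundle C' i).filter (fun j => ¬ v j = x_h), (v j - x_l) ≤ 0 := by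
            apply Finset.sum_nonpos
            intro j hj
            obtain ⟨_, hjne⟩ := Finset.mem_filter.mp hj
            rcases hv j with h | h | h
            · rw [h]; linarith
            · rw [h]; linarith
            · exact absurd h hjne
          have h1 := Finset.sum_filter_add_sum_filter_not (serBundle C' i)
            (fun j => v j = x_h) (fun j => v j - x_l)
          linarith
      _ = ∑ _j ∈ (serBundle C' i).filter (fun j => v j = x_h), (x_h - x_l) :=
          Finset.sum_congr rfl (fun j hj => by rw [(Finset.mem_filter.mp hj).2])
      _ ≤ ∑ _j ∈ pickAt C ((0 : Fin 2), i), (x_h - x_l) := by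
          apply Finset.sum_le_sum_of_subset_of_nonneg
          · rw [hP0]
            intro j hj
            obtain ⟨hjB, hjh⟩ := Finset.mem_filter.mp hj
            exact Finset.mem_filter.mpr ⟨hbsub hjB, hjh⟩
          · intro j _ _; linarith
  · -- welfare maximization
    intro v hv a ha
    classical
    set T : Fin 2 → Fin n → Finset (Fin m) → Finset (Fin m) :=
      fun r i' => truthful x_l x_h (v i') r with hT
    set M : Fin m → ℝ := SerAux.Mv x_l x_h v with hMdef
    have hM_nonneg : ∀ j, 0 ≤ M j := SerAux.Mv_nonneg hpos hlt v
    have hM_le_h : ∀ j, M j ≤ x_h := by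
      intro j
      rw [hMdef]; unfold SerAux.Mv
      split
      · exact le_refl _
      · split <;> linarith
    -- every bidder values its won items at least the max value
    have howner : ∀ (k : Fin n) (j : Fin m), j ∈ serBundle T k → M j ≤ v k j := by
      intro k j hj
      rw [SerAux.serBundle_eq] at hj
      rcases Finset.mem_union.mp hj with hj0 | hj1
      · have := SerAux.pick0_truthful x_l x_h (v k) T k (fun _ _ => rfl)
        rw [this] at hj0
        rw [(Finset.mem_filter.mp hj0).2]
        exact hM_le_h j
      · have := SerAux.pick1_truthful x_l x_h (v k) T k (fun _ _ => rfl)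
        rw [this] at hj1
        have hvk : v k j = x_l := (Finset.mem_filter.mp hj1).2
        have hno : ¬ ∃ i, v i j = x_h := by
          rintro ⟨i0, hi0⟩
          obtain ⟨k', hk', _⟩ := SerAux.high_item_picked x_l x_h v j i0 hi0
          have hdisj : Disjoint (pickAt T ((0 : Fin 2), k')) (pickAt T ((1 : Fin 2), k)) := by
            apply SerAux.pickAt_disjoint'
            simp only [SerAux.posIdx_zero, SerAux.posIdx_one]
            have := k'.isLt
            omega
          have hjp : j ∈ pickAt T ((1 : Fin 2), k) := by rw [this]; exact hj1
          exact Finset.disjoint_left.mp hdisj hk' hjp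
        rw [hvk, hMdef]; unfold SerAux.Mv
        rw [if_neg hno]
        split <;> linarith
    -- every item of positive max value is allocated
    set S : Finset (Fin m) := Finset.univ.biUnion (fun k => serBundle T k) with hS
    have halloc : ∀ j : Fin m, j ∉ S → M j = 0 := by
      intro j hj
      by_contra hjM
      have hex : (∃ i, v i j = x_h) ∨ (∃ i, v i j = x_l) := by
        by_contra hc
        push_neg at hc
        apply hjM
        rw [hMdef]; unfold SerAux.Mv
        rw [if_neg (by exact fun ⟨i, hi⟩ => hc.1 i hi), if_neg (by exact fun ⟨i, hi⟩ => hc.2 i hi)]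
      have hjS : j ∈ S := by
        rcases hex with ⟨i0, hi0⟩ | ⟨i0, hi0⟩
        · obtain ⟨k, hk, _⟩ := SerAux.high_item_picked x_l x_h v j i0 hi0
          exact Finset.mem_biUnion.mpr ⟨k, Finset.mem_univ k,
            SerAux.pickAt_subset_serBundle T ((0 : Fin 2), k) hk⟩
        · obtain ⟨q, hq⟩ := SerAux.low_item_picked x_l x_h v j i0 hi0
          exact Finset.mem_biUnion.mpr ⟨q.2, Finset.mem_univ q.2,
            SerAux.pickAt_subset_serBundle T q hq⟩
      exact hj hjS
    have hdisj_a : Set.PairwiseDisjoint (↑(Finset.univ : Finset (Fin n))) a :=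
      fun i _ k _ hik => ha i k hik
    have hdisj_B : Set.PairwiseDisjoint (↑(Finset.univ : Finset (Fin n)))
        (fun k => serBundle T k) :=
      fun i _ k _ hik => SerAux.bundles_disjoint T hik
    calc ∑ i, ∑ x ∈ a i, v i x
        ≤ ∑ i, ∑ x ∈ a i, M x :=
          Finset.sum_le_sum (fun i _ => Finset.sum_le_sum (fun x _ => by
            rw [hMdef]; unfold SerAux.Mv
            rcases hv i x with h | h | h
            · rw [h]; split
              · linarith
              · split <;> linarith
            · split
              · linarith
              · rw [if_pos ⟨i, h⟩, h]
            · rw [if_pos ⟨i, h⟩, h]))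
      _ = ∑ x ∈ Finset.univ.biUnion a, M x := (Finset.sum_biUnion hdisj_a).symm
      _ ≤ ∑ x, M x := Finset.sum_le_sum_of_subset_of_nonneg (Finset.subset_univ _)
          (fun j _ _ => hM_nonneg j)
      _ = ∑ x ∈ S, M x := (Finset.sum_subset (Finset.subset_univ S)
          (fun x _ hx => halloc x hx)).symm
      _ = ∑ i, ∑ x ∈ serBundle T i, M x := Finset.sum_biUnion hdisj_B
      _ ≤ ∑ i, ∑ x ∈ serBundle T i, v i x :=
          Finset.sum_le_sum (fun i _ => Finset.sum_le_sum (fun x hx => howner i x hx))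
end

section
/- Let (f, P_1, ..., P_n) be an allocation rule and payments for a multi-unit auction with single-minded bidders, realized by a dominant-strategy, individually rational, no-negative-transfers mechanism, where f approximates welfare strictly better than min{m,n}. Let k = max{m,n} and suppose f allocates at least one item each to bidders 1 and 2 on the profile where every bidder i is single-minded for 1 item with value 1. Then: (a) on that profile, bidder 1 wins at least one item and pays at most 1; (b) on the profile (bidder 1 single-minded for 1 item at value k²+1, bidder 2 single-minded for all m items at value k⁴, others single-minded for 1 item at value 1), bidder 1 wins 0 items and pays 0; (c) on the profile (bidder 1 single-minded for all m items at value k⁴, others single-minded for 1 item at value 1), bidder 1 wins all m items and pays at most k². -/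
/-- The single-minded multi-unit valuation with parameters `(q, α)`: value `α` for any
quantity of at least `q` items, and `0` otherwise. -/
noncomputable def smVal (p : ℕ × NNReal) (s : ℕ) : ℝ := if p.1 ≤ s then (p.2 : ℝ) else 0

lemma smVal_nonneg (p : ℕ × NNReal) (s : ℕ) : 0 ≤ smVal p s := by
  unfold smVal; split
  · exact p.2.coe_nonneg
  · exact le_rfl

lemma smVal_le (p : ℕ × NNReal) (s : ℕ) : smVal p s ≤ (p.2 : ℝ) := by
  unfold smVal; split
  · exact le_rfl
  · exact p.2.coe_nonneg

/-- Helper: at a profile where bidder `i` demands all `m` items at value `A` and every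
other bidder's value is at most `B`, if the approximation gap condition holds then
`f` must allocate all `m` items to `i`. -/
lemma win_helper {n : ℕ} (m : ℕ) (c : ℝ)
    (f : (Fin n → ℕ × NNReal) → Fin n → ℕ)
    (hfeas : ∀ v : Fin n → ℕ × NNReal, (∑ j, f v j) ≤ m)
    (happrox : ∀ (v : Fin n → ℕ × NNReal) (a : Fin n → ℕ), (∑ j, a j) ≤ m →
      (∑ j, smVal (v j) (a j)) ≤ c * ∑ j, smVal (v j) (f v j))
    (i : Fin n) (v : Fin n → ℕ × NNReal) (A : NNReal) (B : ℝ)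
    (hvi : v i = (m, A))
    (hother : ∀ j, j ≠ i → ((v j).2 : ℝ) ≤ B)
    (hc0 : 0 ≤ c)
    (hgap : c * (((n - 1 : ℕ) : ℝ) * B) < (A : ℝ)) :
    f v i = m := by
  have hle : f v i ≤ m :=
    le_trans (Finset.single_le_sum (fun j _ => Nat.zero_le _) (Finset.mem_univ i)) (hfeas v)
  by_contra hne
  have hlt : f v i < m := lt_of_le_of_ne hle hne
  -- the welfare achieved by f is at most (n-1)*B
  have hzero : smVal (v i) (f v i) = 0 := by
    unfold smVal; rw [hvi]; simp [Nat.not_le.mpr hlt]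
  have hW : (∑ j, smVal (v j) (f v j)) ≤ ((n - 1 : ℕ) : ℝ) * B := by
    have hsplit : (∑ j, smVal (v j) (f v j)) =
        smVal (v i) (f v i) + ∑ j ∈ Finset.univ.erase i, smVal (v j) (f v j) :=
      (Finset.add_sum_erase _ _ (Finset.mem_univ i)).symm
    rw [hsplit, hzero, zero_add]
    calc ∑ j ∈ Finset.univ.erase i, smVal (v j) (f v j)
        ≤ ∑ j ∈ Finset.univ.erase i, B := by
          refine Finset.sum_le_sum fun j hj => ?_
          exact le_trans (smVal_le _ _) (hother j (Finset.ne_of_mem_erase hj))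
      _ = ((n - 1 : ℕ) : ℝ) * B := by
          rw [Finset.sum_const, Finset.card_erase_of_mem (Finset.mem_univ i)]
          simp [nsmul_eq_mul]
  -- the allocation giving everything to i achieves welfare A
  set a : Fin n → ℕ := fun j => if j = i then m else 0 with ha
  have hA : (A : ℝ) ≤ ∑ j, smVal (v j) (a j) := by
    have hai : smVal (v i) (a i) = (A : ℝ) := by
      unfold smVal; rw [hvi]; simp [ha]
    calc (A : ℝ) = smVal (v i) (a i) := hai.symm
      _ ≤ _ := Finset.single_le_sum (fun j _ => smVal_nonneg _ _) (Finset.mem_univ i)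
  have hsum : (∑ j, a j) ≤ m := by
    simp [ha, Finset.sum_ite_eq']
  have happ := happrox v a hsum
  have : (A : ℝ) ≤ c * (((n - 1 : ℕ) : ℝ) * B) :=
    le_trans (le_trans hA happ) (mul_le_mul_of_nonneg_left hW hc0)
  linarith

/-- Lemma 3: Let `(f, P)` be an allocation rule and payments for a
multi-unit auction with `m ≥ 2` items, `n ≥ 2` single-minded bidders and `k = max {m,n}`,
realized by a dominant-strategy, individually rational, no-negative-transfers mechanism,
where `f` approximates welfare strictly better than `min {m,n}`. If `f` allocates at
least one item each to bidders `1` and `2` on the all-`(1,1)` profile, then: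
(a) on that profile, bidder `1` wins at least one item and pays at most `1`;
(b) on the profile `(bidder 1 ↦ (1, k²+1), bidder 2 ↦ (m, k⁴), others ↦ (1,1))`, bidder
`1` wins `0` items and pays `0`;
(c) on the profile `(bidder 1 ↦ (m, k⁴), others ↦ (1,1))`, bidder `1` wins all `m` items
and pays at most `k²`. -/
theorem multiunit_lemma_small_pay
    (m n : ℕ) (hm : 2 ≤ m) (hn : 2 ≤ n)
    (f : (Fin n → ℕ × NNReal) → Fin n → ℕ)
    (P : (Fin n → ℕ × NNReal) → Fin n → ℝ)
    (c : ℝ) (hc0 : 0 < c) (hc : c < min (m : ℝ) n)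
    -- feasibility
    (hfeas : ∀ v : Fin n → ℕ × NNReal, (∑ j, f v j) ≤ m)
    -- dominant-strategy incentive compatibility
    (hDSIC : ∀ (i : Fin n) (v : Fin n → ℕ × NNReal) (d' : ℕ × NNReal),
      smVal (v i) (f v i) - P v i ≥
        smVal (v i) (f (Function.update v i d') i) - P (Function.update v i d') i)
    -- individual rationality
    (hIR : ∀ (v : Fin n → ℕ × NNReal) (i : Fin n), 0 ≤ smVal (v i) (f v i) - P v i)
    -- no-negative-transfers
    (hNNT : ∀ (v : Fin n → ℕ × NNReal) (i : Fin n), 0 ≤ P v i)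
    -- c-approximation of the optimal welfare
    (happrox : ∀ (v : Fin n → ℕ × NNReal) (a : Fin n → ℕ), (∑ j, a j) ≤ m →
      (∑ j, smVal (v j) (a j)) ≤ c * ∑ j, smVal (v j) (f v j))
    (k : ℕ) (hk : k = max m n)
    (i0 : Fin n) (hi0 : i0 = ⟨0, by omega⟩) (i1 : Fin n) (hi1 : i1 = ⟨1, by omega⟩)
    (vone : Fin n → ℕ × NNReal) (hvone : vone = fun _ => (1, 1))
    (hwin : 1 ≤ f vone i0 ∧ 1 ≤ f vone i1) :
    -- (a)
    (1 ≤ f vone i0 ∧ P vone i0 ≤ 1) ∧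
    -- (b)
    (∀ vb : Fin n → ℕ × NNReal,
      (vb = fun j => if j = i0 then (1, (k : NNReal) ^ 2 + 1)
        else if j = i1 then (m, (k : NNReal) ^ 4) else (1, 1)) →
      f vb i0 = 0 ∧ P vb i0 = 0) ∧
    -- (c)
    (∀ vc : Fin n → ℕ × NNReal,
      (vc = fun j => if j = i0 then (m, (k : NNReal) ^ 4) else (1, 1)) →
      f vc i0 = m ∧ P vc i0 ≤ (k : ℝ) ^ 2) := by
  have hne01 : i0 ≠ i1 := by
    rw [hi0, hi1]; simp [Fin.ext_iff]
  have hkm : m ≤ k := hk ▸ le_max_left m n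
  have hkn : n ≤ k := hk ▸ le_max_right m n
  have hk2 : 2 ≤ k := le_trans hm hkm
  have hkR : (2 : ℝ) ≤ (k : ℝ) := by exact_mod_cast hk2
  have hck : c < (k : ℝ) := lt_of_lt_of_le hc (le_trans (min_le_right _ _) (by exact_mod_cast hkn))
  have hn1 : ((n - 1 : ℕ) : ℝ) ≤ (k : ℝ) - 1 := by
    have h1 : (n : ℝ) ≤ (k : ℝ) := by exact_mod_cast hkn
    rw [Nat.cast_sub (by omega : 1 ≤ n)]
    push_cast; linarith
  constructor
  · -- part (a)
    refine ⟨hwin.1, ?_⟩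
    have hir := hIR vone i0
    have hvo0 : vone i0 = (1, 1) := by rw [hvone]
    have hs : smVal (vone i0) (f vone i0) = 1 := by
      unfold smVal; rw [hvo0]; simp [hwin.1]
    rw [hs] at hir; linarith
  constructor
  · -- part (b)
    intro vb hvb
    have hvb0 : vb i0 = (1, (k : NNReal) ^ 2 + 1) := by rw [hvb]; simp
    have hvb1 : vb i1 = (m, (k : NNReal) ^ 4) := by rw [hvb]; simp [hne01.symm]
    have hf1 : f vb i1 = m := by
      apply win_helper m c f hfeas happrox i1 vb ((k : NNReal) ^ 4) ((k : ℝ) ^ 2 + 1) hvb1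
      · intro j hj
        by_cases hji0 : j = i0
        · have hj' : vb j = (1, (k : NNReal) ^ 2 + 1) := by rw [hvb]; simp [hji0]
          rw [hj']; push_cast; norm_num
        · have hj' : vb j = (1, 1) := by rw [hvb]; simp [hji0, hj]
          rw [hj']; push_cast; nlinarith
      · exact le_of_lt hc0
      · push_cast
        nlinarith [mul_le_mul_of_nonneg_left hn1 (le_of_lt hc0),
          mul_lt_mul_of_pos_right hck
            (by nlinarith : (0:ℝ) < ((k:ℝ) - 1) * ((k:ℝ) ^ 2 + 1)),
          mul_le_mul_of_nonneg_right hn1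
            (by nlinarith : (0:ℝ) ≤ ((k:ℝ) ^ 2 + 1) * c)]
    have hf0 : f vb i0 = 0 := by
      have hfe := hfeas vb
      have hpair : f vb i0 + f vb i1 ≤ ∑ j, f vb j := by
        calc f vb i0 + f vb i1 = ∑ j ∈ ({i0, i1} : Finset (Fin n)), f vb j :=
              (Finset.sum_pair hne01).symm
          _ ≤ ∑ j, f vb j := Finset.sum_le_sum_of_subset (Finset.subset_univ _)
      omega
    refine ⟨hf0, ?_⟩
    have hir := hIR vb i0
    have hsz : smVal (vb i0) (f vb i0) = 0 := by
      unfold smVal; rw [hvb0, hf0]; norm_num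
    have hnn := hNNT vb i0
    rw [hsz] at hir
    linarith
  · -- part (c)
    intro vc hvc
    have hvc0 : vc i0 = (m, (k : NNReal) ^ 4) := by rw [hvc]; simp
    have h1k2 : (1 : ℝ) ≤ (k : ℝ) ^ 2 := by nlinarith
    have h24 : (k : ℝ) ^ 2 ≤ (k : ℝ) ^ 4 := by
      nlinarith [mul_le_mul_of_nonneg_left h1k2 (by positivity : (0:ℝ) ≤ (k:ℝ) ^ 2)]
    have hgap2 : c * (((n - 1 : ℕ) : ℝ) * 1) < (k : ℝ) ^ 2 := by
      nlinarith [mul_le_mul_of_nonneg_left hn1 (le_of_lt hc0),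
        mul_lt_mul_of_pos_right hck (show (0:ℝ) < (k:ℝ) - 1 by linarith)]
    have hfc : f vc i0 = m := by
      apply win_helper m c f hfeas happrox i0 vc ((k : NNReal) ^ 4) 1 hvc0
      · intro j hj
        have hj' : vc j = (1, 1) := by rw [hvc]; simp [hj]
        rw [hj']; norm_num
      · exact le_of_lt hc0
      · push_cast
        linarith [hgap2, h24]
    refine ⟨hfc, ?_⟩
    set u : Fin n → ℕ × NNReal := Function.update vc i0 (m, (k : NNReal) ^ 2) with hu
    have hu0 : u i0 = (m, (k : NNReal) ^ 2) := Function.update_self _ _ _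
    have hfu : f u i0 = m := by
      apply win_helper m c f hfeas happrox i0 u ((k : NNReal) ^ 2) 1 hu0
      · intro j hj
        have hj' : u j = (1, 1) := by
          rw [hu, Function.update_of_ne hj, hvc]; simp [hj]
        rw [hj']; norm_num
      · exact le_of_lt hc0
      · push_cast
        linarith [hgap2]
    have hPu : P u i0 ≤ (k : ℝ) ^ 2 := by
      have hir := hIR u i0
      have hs : smVal (u i0) (f u i0) = (k : ℝ) ^ 2 := by
        unfold smVal; rw [hu0, hfu]; push_cast; simp
      rw [hs] at hir; linarith
    have hdsic := hDSIC i0 vc (m, (k : NNReal) ^ 2)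
    rw [← hu] at hdsic
    have hs1 : smVal (vc i0) (f vc i0) = (k : ℝ) ^ 4 := by
      unfold smVal; rw [hvc0, hfc]; push_cast; simp
    have hs2 : smVal (vc i0) (f u i0) = (k : ℝ) ^ 4 := by
      unfold smVal; rw [hvc0, hfu]; push_cast; simp
    rw [hs1, hs2] at hdsic
    linarith
end
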